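/- arXiv:2309.06901 — 7 statements merged into one kernel-verified Lean document; each statement's English description precedes it below -/
import Mathlib

section
/- For natural numbers n and t with n ≥ t+1, the alternating sum ∑_{i=0}^{t} (-1)^i * C(t+1-i, t-i) * C(n+1, i) equals (-1)^t * C(n-1, t). -/
lemma altsum_aux (m t : ℕ) :
    ∑ i ∈ Finset.range (t + 1), (-1 : ℤ) ^ i * ((m + 1).choose i : ℤ)
      = (-1 : ℤ) ^ t * (m.choose t : ℤ) := by
  induction t with
  | zero => simp
  | succ t ih =>
    rw [Finset.sum_range_succ, ih, Nat.choose_succ_succ]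
    push_cast
    ring

lemma coeff_sum_aux (m t : ℕ) :
    ∑ i ∈ Finset.range (t + 1), ((t : ℤ) + 1 - i) * ((-1 : ℤ) ^ i * ((m + 2).choose i : ℤ))
      = (-1 : ℤ) ^ t * (m.choose t : ℤ) := by
  induction t with
  | zero => simp
  | succ t ih =>
    rw [Finset.sum_range_succ]
    have step : ∑ i ∈ Finset.range (t + 1),
        (((t : ℤ) + 1) + 1 - i) * ((-1 : ℤ) ^ i * ((m + 2).choose i : ℤ))
        = (∑ i ∈ Finset.range (t + 1), ((t : ℤ) + 1 - i) * ((-1 : ℤ) ^ i * ((m + 2).choose i : ℤ)))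
          + ∑ i ∈ Finset.range (t + 1), (-1 : ℤ) ^ i * ((m + 2).choose i : ℤ) := by
      rw [← Finset.sum_add_distrib]
      apply Finset.sum_congr rfl
      intro i _
      ring
    push_cast [step, ih]
    have h2 : ∑ i ∈ Finset.range (t + 1), (-1 : ℤ) ^ i * ((m + 2).choose i : ℤ)
        + (((t : ℤ) + 1) + 1 - ((t : ℤ) + 1)) * ((-1 : ℤ) ^ (t + 1) * ((m + 2).choose (t + 1) : ℤ))
        = (-1 : ℤ) ^ (t + 1) * ((m + 1).choose (t + 1) : ℤ) := by
      have := altsum_aux (m + 1) (t + 1)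
      rw [Finset.sum_range_succ] at this
      linear_combination this
    have pascal : (m + 1).choose (t + 1) = m.choose t + m.choose (t + 1) :=
      Nat.choose_succ_succ m t
    push_cast [pascal] at h2 ⊢
    linear_combination h2

/-- For natural numbers `n` and `t` with `n ≥ t + 1`,
`∑_{i=0}^{t} (-1)^i * C(t+1-i, t-i) * C(n+1, i) = (-1)^t * C(n-1, t)`. -/
theorem alternating_binomial_identity (n t : ℕ) (h : n ≥ t + 1) :
    ∑ i ∈ Finset.range (t + 1),
      ((-1 : ℤ) ^ i * ((t + 1 - i).choose (t - i) : ℤ) * ((n + 1).choose i : ℤ)) =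
      (-1 : ℤ) ^ t * ((n - 1).choose t : ℤ) := by
  obtain ⟨m, rfl⟩ : ∃ m, n = m + 1 := ⟨n - 1, by omega⟩
  have key : ∀ i ∈ Finset.range (t + 1),
      (-1 : ℤ) ^ i * ((t + 1 - i).choose (t - i) : ℤ) * (((m + 1) + 1).choose i : ℤ)
        = ((t : ℤ) + 1 - i) * ((-1 : ℤ) ^ i * ((m + 2).choose i : ℤ)) := by
    intro i hi
    rw [Finset.mem_range] at hi
    have hle : i ≤ t := by omega
    have h1 : t + 1 - i = (t - i) + 1 := by omega
    rw [h1, Nat.choose_succ_self_right]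
    have h2 : ((t - i : ℕ) : ℤ) = (t : ℤ) - i := by
      push_cast [Nat.cast_sub hle]; ring
    push_cast [h2]
    ring
  rw [Finset.sum_congr rfl key, coeff_sum_aux m t]
  simp
end

section
/- Let k be a perfect field of characteristic p > 0 and let C denote the Cartier operator on formal Laurent differentials over k, defined k^{1/p}-semilinearly by C(t^n dt) = 0 if p does not divide n+1 and C(t^n dt) = t^{(n+1)/p - 1} dt if p divides n+1, extended to ∑ a_n t^n dt by C(∑ a_n t^n dt) = ∑ a_{pn-1}^{1/p} t^{n-1} dt. Then for any f ∈ k((t)) and any Laurent differential ω, one has Res(f · C(ω)) = (Res(f^p · ω))^{1/p}. -/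
section CartierAux

open HahnSeries Finset

variable {k : Type*} [Field k] {p : ℕ} [hp : Fact p.Prime] [CharP k p]

noncomputable instance : CharP (LaurentSeries k) p :=
  charP_of_injective_ringHom (HahnSeries.C_injective (Γ := ℤ) (R := k)) p

/-- If all coefficients of `g` at indices `≤ b` vanish, then coefficients of `g ^ n`
at indices `≤ n * b` vanish (for `n ≥ 1`). -/
lemma pow_coeff_eq_zero_aux (g : LaurentSeries k) (b : ℤ)
    (h : ∀ i ≤ b, g.coeff i = 0) :
    ∀ n : ℕ, 0 < n → ∀ m : ℤ, m ≤ (n : ℤ) * b → (g ^ n).coeff m = 0 := by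
  intro n
  induction n with
  | zero => intro h0; omega
  | succ n ih =>
    intro _ m hm
    by_contra hne
    have hmem : m ∈ (g ^ (n + 1)).support := hne
    rcases Nat.eq_zero_or_pos n with rfl | hn
    · rw [pow_one] at hne
      exact hne (h m (by push_cast at hm; linarith))
    · rw [pow_succ] at hmem
      obtain ⟨i, hi, j, hj, rfl⟩ := HahnSeries.support_mul_subset hmem
      have hig : ¬ ((g ^ n).coeff i = 0) := hi
      have hjg : ¬ (g.coeff j = 0) := hj
      have h1 : (n : ℤ) * b < i := by
        by_contra hle
        exact hig (ih hn i (by omega))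
      have h2 : b < j := by
        by_contra hle
        exact hjg (h j (by omega))
      push_cast at hm
      nlinarith

lemma my_sum_ite {α : Type*} {M : Type*} [AddCommMonoid M] (s : Finset α) (a : α) (F : α → M)
    [D : ∀ x, Decidable (a = x)] [D2 : Decidable (a ∈ s)] :
    (∑ x ∈ s, if a = x then F x else 0) = if a ∈ s then F a else 0 := by
  by_cases h : a ∈ s
  · rw [if_pos h, Finset.sum_eq_single_of_mem a h]
    · rw [if_pos rfl]
    · intro x hx hxa
      rw [if_neg (fun he => hxa he.symm)]
  · rw [if_neg h]
    exact Finset.sum_eq_zero fun x hx => if_neg (fun he => h (by rw [he]; exact hx))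

lemma hs_coeff_sum {α : Type*} (s : Finset α) (F : α → LaurentSeries k) (i : ℤ) :
    (∑ a ∈ s, F a).coeff i = ∑ a ∈ s, (F a).coeff i :=
  map_sum (HahnSeries.coeff.addMonoidHom i) F s

lemma coeff_pow_char_mul (f : LaurentSeries k) (n : ℤ) :
    (f ^ p).coeff (p * n) = (f.coeff n) ^ p := by
  have hp1 : 0 < p := hp.out.pos
  rcases eq_or_ne f 0 with rfl | hf
  · simp [zero_pow hp1.ne']
  · set o := f.order with ho
    set b : ℤ := max (p * n - (p - 1) * o) |p * n| with hb
    set ftr : LaurentSeries k := ∑ i ∈ Finset.Icc o b, HahnSeries.single i (f.coeff i) with hftr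
    have hftrc : ∀ i : ℤ, ftr.coeff i = if i ∈ Finset.Icc o b then f.coeff i else 0 := by
      intro i
      rw [hftr, hs_coeff_sum]
      simp only [HahnSeries.coeff_single]
      exact my_sum_ite (D := fun x => Classical.propDecidable _) _ _ _
    set g : LaurentSeries k := f - ftr with hg
    have hgc : ∀ i ≤ b, g.coeff i = 0 := by
      intro i hib
      rw [hg, HahnSeries.coeff_sub, hftrc i]
      by_cases hmem : i ∈ Finset.Icc o b
      · simp [hmem]
      · simp only [hmem, if_false, sub_zero]
        apply HahnSeries.coeff_eq_zero_of_lt_order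
        rw [Finset.mem_Icc] at hmem
        omega
    have hsplit : f ^ p = ftr ^ p + g ^ p := by
      have : f = ftr + g := by rw [hg]; ring
      rw [this, add_pow_char]
    have hgp : (g ^ p).coeff (p * n) = 0 := by
      apply pow_coeff_eq_zero_aux g b hgc p hp1
      have h1 : |p * n| ≤ b := le_max_right _ _
      have h2 : (p : ℤ) * n ≤ |p * n| := le_abs_self _
      have h3 : (1 : ℤ) ≤ p := by exact_mod_cast hp1
      nlinarith [abs_nonneg ((p : ℤ) * n)]
    rw [hsplit, HahnSeries.coeff_add, hgp, add_zero]
    have hftp : ftr ^ p = ∑ i ∈ Finset.Icc o b, HahnSeries.single ((p : ℤ) * i) (f.coeff i ^ p) := by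
      rw [hftr, sum_pow_char]
      refine Finset.sum_congr rfl fun i _ => ?_
      rw [HahnSeries.single_pow]
      congr 1
    rw [hftp, hs_coeff_sum]
    simp only [HahnSeries.coeff_single]
    have hinj : ∀ i : ℤ, (p : ℤ) * n = (p : ℤ) * i ↔ n = i := by
      intro i
      constructor
      · intro h; exact mul_left_cancel₀ (by exact_mod_cast hp1.ne') h
      · intro h; rw [h]
    simp only [hinj]
    rw [my_sum_ite (Finset.Icc o b) n (fun i => f.coeff i ^ p)]
    by_cases hmem : n ∈ Finset.Icc o b
    · simp [hmem]
    · simp only [hmem, if_false]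
      rw [Finset.mem_Icc] at hmem
      have hno : n < o := by
        by_contra hlt
        push_neg at hlt
        have hnb : b < n := by omega
        have h1 : (p : ℤ) * n - (p - 1) * o ≤ b := le_max_left _ _
        have h3 : (1 : ℤ) ≤ p := by exact_mod_cast hp1
        nlinarith
      have : f.coeff n = 0 := HahnSeries.coeff_eq_zero_of_lt_order hno
      rw [this, zero_pow hp1.ne']

lemma coeff_pow_char_not_dvd (f : LaurentSeries k) (m : ℤ) (hm : ¬ (p : ℤ) ∣ m) :
    (f ^ p).coeff m = 0 := by
  have hp1 : 0 < p := hp.out.pos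
  rcases eq_or_ne f 0 with rfl | hf
  · simp [zero_pow hp1.ne']
  · set o := f.order with ho
    set b : ℤ := max (m - (p - 1) * o) |m| with hb
    set ftr : LaurentSeries k := ∑ i ∈ Finset.Icc o b, HahnSeries.single i (f.coeff i) with hftr
    have hftrc : ∀ i : ℤ, ftr.coeff i = if i ∈ Finset.Icc o b then f.coeff i else 0 := by
      intro i
      rw [hftr, hs_coeff_sum]
      simp only [HahnSeries.coeff_single]
      exact my_sum_ite (D := fun x => Classical.propDecidable _) _ _ _
    set g : LaurentSeries k := f - ftr with hg
    have hgc : ∀ i ≤ b, g.coeff i = 0 := by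
      intro i hib
      rw [hg, HahnSeries.coeff_sub, hftrc i]
      by_cases hmem : i ∈ Finset.Icc o b
      · simp [hmem]
      · simp only [hmem, if_false, sub_zero]
        apply HahnSeries.coeff_eq_zero_of_lt_order
        rw [Finset.mem_Icc] at hmem
        omega
    have hsplit : f ^ p = ftr ^ p + g ^ p := by
      have : f = ftr + g := by rw [hg]; ring
      rw [this, add_pow_char]
    have hgp : (g ^ p).coeff m = 0 := by
      apply pow_coeff_eq_zero_aux g b hgc p hp1
      have h1 : |m| ≤ b := le_max_right _ _
      have h2 : m ≤ |m| := le_abs_self _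
      have h3 : (1 : ℤ) ≤ p := by exact_mod_cast hp1
      nlinarith [abs_nonneg m]
    rw [hsplit, HahnSeries.coeff_add, hgp, add_zero]
    have hftp : ftr ^ p = ∑ i ∈ Finset.Icc o b, HahnSeries.single ((p : ℤ) * i) (f.coeff i ^ p) := by
      rw [hftr, sum_pow_char]
      refine Finset.sum_congr rfl fun i _ => ?_
      rw [HahnSeries.single_pow]
      congr 1
    rw [hftp, hs_coeff_sum]
    apply Finset.sum_eq_zero
    intro i _
    show ((single ((p:ℤ)*i)) (f.coeff i ^ p)).coeff m = 0
    rw [HahnSeries.coeff_single]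
    have : m ≠ (p : ℤ) * i := fun h => hm ⟨i, h⟩
    simp [this]

variable [PerfectRing k p]

theorem cartier_adjoint_frobenius_residue' (f ω Cω : LaurentSeries k)
    (hCω : ∀ n : ℤ, Cω.coeff (n - 1) = (frobeniusEquiv k p).symm (ω.coeff (p * n - 1))) :
    (f * Cω).coeff (-1) = (frobeniusEquiv k p).symm ((f ^ p * ω).coeff (-1)) := by
  have hp0 : ((p : ℤ)) ≠ 0 := by exact_mod_cast hp.out.ne_zero
  have hCf : ∀ j : ℤ, Cω.coeff j = (frobeniusEquiv k p).symm (ω.coeff ((p : ℤ) * j + p - 1)) := by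
    intro j
    have h := hCω (j + 1)
    rw [show j + 1 - 1 = j by ring, show (p : ℤ) * (j + 1) - 1 = (p : ℤ) * j + p - 1 by ring] at h
    exact h
  have key : frobenius k p ((f * Cω).coeff (-1)) = (f ^ p * ω).coeff (-1) := by
    rw [HahnSeries.coeff_mul, HahnSeries.coeff_mul, map_sum]
    refine Finset.sum_nbij' (fun ij => ((p : ℤ) * ij.1, (p : ℤ) * ij.2 + p - 1))
      (fun ab => (ab.1 / p, (ab.2 + 1) / p - 1)) ?_ ?_ ?_ ?_ ?_
    · rintro ⟨i, j⟩ hmem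
      rw [Finset.mem_addAntidiagonal] at hmem ⊢
      obtain ⟨h1, h2, h3⟩ := hmem
      rw [HahnSeries.mem_support] at h1 h2
      refine ⟨?_, ?_, ?_⟩
      · rw [HahnSeries.mem_support, coeff_pow_char_mul]
        exact pow_ne_zero p h1
      · rw [HahnSeries.mem_support]
        intro h0
        apply h2
        rw [hCf j, h0, map_zero]
      · simp only at h3 ⊢
        linear_combination (p : ℤ) * h3
    · rintro ⟨a, b⟩ hmem
      rw [Finset.mem_addAntidiagonal] at hmem ⊢
      obtain ⟨h1, h2, h3⟩ := hmem
      rw [HahnSeries.mem_support] at h1 h2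
      simp only at h3 ⊢
      have hd : (p : ℤ) ∣ a := by
        by_contra hnd
        exact h1 (coeff_pow_char_not_dvd f a hnd)
      obtain ⟨c, rfl⟩ := hd
      have e1 : ((p : ℤ) * c) / p = c := Int.mul_ediv_cancel_left _ hp0
      have e2 : (b + 1) / (p : ℤ) = -c := by
        rw [show b + 1 = (p : ℤ) * (-c) by linarith]
        exact Int.mul_ediv_cancel_left _ hp0
      rw [e1, e2]
      refine ⟨?_, ?_, by ring⟩
      · rw [HahnSeries.mem_support]
        intro h0
        apply h1
        rw [coeff_pow_char_mul, h0, zero_pow hp.out.ne_zero]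
      · rw [HahnSeries.mem_support, hCf (-c - 1),
          show (p : ℤ) * (-c - 1) + p - 1 = b by linarith]
        intro h0
        apply h2
        have := (frobeniusEquiv k p).symm.injective (h0.trans (map_zero _).symm)
        exact this
    · rintro ⟨i, j⟩ hmem
      simp only [Prod.mk.injEq]
      constructor
      · exact Int.mul_ediv_cancel_left _ hp0
      · rw [show (p : ℤ) * j + p - 1 + 1 = (p : ℤ) * (j + 1) by ring,
          Int.mul_ediv_cancel_left _ hp0]
        ring
    · rintro ⟨a, b⟩ hmem
      rw [Finset.mem_addAntidiagonal] at hmem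
      obtain ⟨h1, h2, h3⟩ := hmem
      rw [HahnSeries.mem_support] at h1
      simp only at h3
      have hd : (p : ℤ) ∣ a := by
        by_contra hnd
        exact h1 (coeff_pow_char_not_dvd f a hnd)
      obtain ⟨c, rfl⟩ := hd
      have e1 : ((p : ℤ) * c) / p = c := Int.mul_ediv_cancel_left _ hp0
      have e2 : (b + 1) / (p : ℤ) = -c := by
        rw [show b + 1 = (p : ℤ) * (-c) by linarith]
        exact Int.mul_ediv_cancel_left _ hp0
      simp only [e1, e2, Prod.mk.injEq]
      constructor
      · trivial
      · linarith
    · rintro ⟨i, j⟩ hmem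
      simp only
      rw [map_mul, coeff_pow_char_mul, hCf j, frobenius_apply_frobeniusEquiv_symm,
        frobenius_def]
  rw [← key, frobeniusEquiv_symm_apply_frobenius]

end CartierAux

/-- Let `k` be a perfect field of characteristic `p > 0` and `C` the Cartier operator on
formal Laurent differentials over `k`, with `(C ω)` having `t^{n-1}`-coefficient
`(ω-coefficient of t^{p n - 1})^{1/p}`.  Then for any `f ∈ k((t))` and any Laurent
differential `ω`, one has `Res(f · C(ω)) = (Res(f^p · ω))^{1/p}`. -/
theorem cartier_adjoint_frobenius_residue (k : Type*) [Field k] (p : ℕ) [hp : Fact p.Prime]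
    [CharP k p] [PerfectRing k p]
    (f ω Cω : LaurentSeries k)
    (hCω : ∀ n : ℤ, Cω.coeff (n - 1) = (frobeniusEquiv k p).symm (ω.coeff (p * n - 1))) :
    (f * Cω).coeff (-1) = (frobeniusEquiv k p).symm ((f ^ p * ω).coeff (-1)) := by
  exact cartier_adjoint_frobenius_residue' f ω Cω hCω
end

section
/- Let k be a perfect field of characteristic p > 0, f = ∑_{i≥-m} a_i t^i ∈ k((t)) and ω = ∑_{j≥-n} b_j t^j dt. Then ∑_{pi+j=-1} a_i^p b_j = (∑_{i+j=0} a_i b_{pj-1}^{1/p})^p, i.e. Res(f^p ω) = (Res(f · C(ω)))^p where C is the Cartier operator. -/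
private lemma coeff_sum' {k : Type*} [Field k] {ι : Type*} (s : Finset ι)
    (F : ι → LaurentSeries k) (x : ℤ) :
    (∑ i ∈ s, F i).coeff x = ∑ i ∈ s, (F i).coeff x :=
  map_sum (HahnSeries.coeff.addMonoidHom x) F s

/-- Coefficient of a product of Laurent series as a finite sum over an interval. -/
private lemma mul_coeff_Icc {k : Type*} [Field k] (a b : LaurentSeries k) (d lo hi : ℤ)
    (ha : ∀ i, i < lo → a.coeff i = 0) (hb : ∀ i, hi < i → b.coeff (d - i) = 0) :
    (a * b).coeff d = ∑ i ∈ Finset.Icc lo hi, a.coeff i * b.coeff (d - i) := by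
  classical
  rw [HahnSeries.coeff_mul]
  have emb : Function.Injective (fun i : ℤ => (i, d - i)) := by
    intro x y h; simpa using congrArg Prod.fst h
  set S := Finset.antidiagonal a.isPWO_support b.isPWO_support d with hS
  set T := (Finset.Icc lo hi).map ⟨fun i => (i, d - i), emb⟩ with hT
  have hTsum : ∑ i ∈ Finset.Icc lo hi, a.coeff i * b.coeff (d - i)
      = ∑ ij ∈ T, a.coeff ij.1 * b.coeff ij.2 := by
    rw [hT, Finset.sum_map]; rfl
  have memT : ∀ ij : ℤ × ℤ, ij ∈ T ↔ ij.1 ∈ Finset.Icc lo hi ∧ ij.2 = d - ij.1 := by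
    intro ij
    constructor
    · intro h
      rw [hT, Finset.mem_map] at h
      obtain ⟨i, hi, hij⟩ := h
      simp only [Function.Embedding.coeFn_mk] at hij
      subst hij; exact ⟨hi, rfl⟩
    · rintro ⟨h1, h2⟩
      rw [hT, Finset.mem_map]
      exact ⟨ij.1, h1, by simp [Function.Embedding.coeFn_mk, ← h2]⟩
  have h1 : ∑ ij ∈ S, a.coeff ij.1 * b.coeff ij.2
      = ∑ ij ∈ S ∩ T, a.coeff ij.1 * b.coeff ij.2 := by
    refine (Finset.sum_subset Finset.inter_subset_left fun ij hij hij' => ?_).symm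
    have hij'' : ij ∉ T := fun h => hij' (Finset.mem_inter.mpr ⟨hij, h⟩)
    rw [hS, Finset.mem_antidiagonal] at hij
    obtain ⟨hij1, hij2, hij3⟩ := hij
    have hij2' : ij.2 = d - ij.1 := by omega
    have : ij.1 ∉ Finset.Icc lo hi := fun h => hij'' ((memT ij).mpr ⟨h, hij2'⟩)
    rw [Finset.mem_Icc] at this
    rcases (by omega : ij.1 < lo ∨ hi < ij.1) with h | h
    · rw [ha ij.1 h, zero_mul]
    · rw [hij2', hb ij.1 h, mul_zero]
  have h2 : ∑ ij ∈ T, a.coeff ij.1 * b.coeff ij.2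
      = ∑ ij ∈ S ∩ T, a.coeff ij.1 * b.coeff ij.2 := by
    refine (Finset.sum_subset Finset.inter_subset_right fun ij hij hij' => ?_).symm
    have hijS : ij ∉ S := fun h => hij' (Finset.mem_inter.mpr ⟨h, hij⟩)
    obtain ⟨h1', h2'⟩ := (memT ij).mp hij
    rw [hS, Finset.mem_antidiagonal] at hijS
    push_neg at hijS
    by_cases hA : ij.1 ∈ a.support
    · by_cases hB : ij.2 ∈ b.support
      · exact absurd (by omega) (hijS hA hB)
      · rw [HahnSeries.mem_support, not_not] at hB
        rw [hB, mul_zero]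
    · rw [HahnSeries.mem_support, not_not] at hA
      rw [hA, zero_mul]
  rw [hTsum, h1, h2]

/-- Vanishing of product coefficients below the sum of the orders. -/
private lemma mul_coeff_eq_zero' {k : Type*} [Field k] (a b : LaurentSeries k) (la lb x : ℤ)
    (ha : ∀ i, i < la → a.coeff i = 0) (hb : ∀ j, j < lb → b.coeff j = 0)
    (hx : x < la + lb) : (a * b).coeff x = 0 := by
  rw [mul_coeff_Icc a b x la (la - 1) ha (fun i hi => hb _ (by omega))]
  rw [Finset.Icc_eq_empty (by omega), Finset.sum_empty]

private lemma pow_coeff_eq_zero' {k : Type*} [Field k] (a : LaurentSeries k) (la : ℤ)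
    (ha : ∀ i, i < la → a.coeff i = 0) :
    ∀ (j : ℕ) (x : ℤ), x < (j : ℤ) * la → (a ^ j).coeff x = 0 := by
  intro j
  induction j with
  | zero =>
    intro x hx
    simp only [Nat.cast_zero, zero_mul] at hx
    rw [pow_zero, HahnSeries.coeff_one, if_neg (by omega)]
  | succ j ih =>
    intro x hx
    rw [pow_succ]
    refine mul_coeff_eq_zero' _ _ ((j : ℤ) * la) la x ih ha ?_
    have : ((j : ℤ) + 1) * la = (j : ℤ) * la + la := by ring
    push_cast at hx
    omega

/-- Let `k` be a perfect field of characteristic `p > 0`, `f = ∑_{i ≥ -m} a_i t^i ∈ k((t))`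
and `ω = ∑_{j ≥ -n} b_j t^j dt`.  Then `∑_{p i + j = -1} a_i^p b_j =
(∑_{i + j = 0} a_i (b_{p j - 1})^{1/p})^p`, i.e. `Res(f^p ω) = (Res(f · C(ω)))^p`
where `C` is the Cartier operator. -/
theorem residue_frobenius_cartier (k : Type*) [Field k] (p : ℕ) [hp : Fact p.Prime]
    [CharP k p] [PerfectRing k p] (m n : ℕ)
    (f ω Cω : LaurentSeries k)
    (hf : ∀ i : ℤ, i < -(m : ℤ) → f.coeff i = 0)
    (hω : ∀ j : ℤ, j < -(n : ℤ) → ω.coeff j = 0)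
    (hCω : ∀ j : ℤ, Cω.coeff (j - 1) = (frobeniusEquiv k p).symm (ω.coeff (p * j - 1))) :
    (∑ i ∈ Finset.Icc (-(m : ℤ)) (n : ℤ), (f.coeff i) ^ p * ω.coeff (-1 - p * i) =
      (∑ i ∈ Finset.Icc (-(m : ℤ)) (n : ℤ),
        f.coeff i * (frobeniusEquiv k p).symm (ω.coeff (p * (-i) - 1))) ^ p) ∧
    (f ^ p * ω).coeff (-1) = ((f * Cω).coeff (-1)) ^ p := by
  classical
  haveI : ExpChar k p := .prime hp.out
  haveI : CharP (LaurentSeries k) p :=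
    charP_of_injective_ringHom (HahnSeries.C_injective (Γ := ℤ) (R := k)) p
  haveI : ExpChar (LaurentSeries k) p := .prime hp.out
  have hp1 : (1 : ℤ) ≤ (p : ℤ) := by exact_mod_cast hp.out.one_lt.le
  -- Part 1
  have part1 : (∑ i ∈ Finset.Icc (-(m : ℤ)) (n : ℤ), (f.coeff i) ^ p * ω.coeff (-1 - p * i) =
      (∑ i ∈ Finset.Icc (-(m : ℤ)) (n : ℤ),
        f.coeff i * (frobeniusEquiv k p).symm (ω.coeff (p * (-i) - 1))) ^ p) := by
    rw [sum_pow_char]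
    refine Finset.sum_congr rfl fun i _ => ?_
    rw [mul_pow, frobeniusEquiv_symm_pow_p]
    congr 2
    ring
  refine ⟨part1, ?_⟩
  -- Part 2
  set N : ℤ := (n : ℤ) + ((p : ℤ) - 1) * (m : ℤ) with hN
  have hnN : (n : ℤ) ≤ N := by
    have : (0:ℤ) ≤ ((p : ℤ) - 1) * (m : ℤ) := mul_nonneg (by omega) (by positivity)
    omega
  set P : LaurentSeries k := ∑ i ∈ Finset.Icc (-(m : ℤ)) N, HahnSeries.single i (f.coeff i)
    with hP
  have hPcoeff : ∀ j : ℤ,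
      P.coeff j = if j ∈ Finset.Icc (-(m : ℤ)) N then f.coeff j else 0 := by
    intro j
    have h1 : ∀ i ∈ Finset.Icc (-(m : ℤ)) N,
        (HahnSeries.single i (f.coeff i)).coeff j = if j = i then f.coeff i else 0 :=
      fun i _ => by rw [HahnSeries.coeff_single]; congr 1
    rw [hP, coeff_sum', Finset.sum_congr rfl h1, Finset.sum_ite_eq]
  have hPlow : ∀ i : ℤ, i < -(m : ℤ) → P.coeff i = 0 := by
    intro i hi
    rw [hPcoeff, if_neg]
    rw [Finset.mem_Icc]
    omega
  set g : LaurentSeries k := f - P with hg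
  have hglow : ∀ j : ℤ, j < N + 1 → g.coeff j = 0 := by
    intro j hj
    rw [hg, HahnSeries.coeff_sub, hPcoeff]
    by_cases h : j ∈ Finset.Icc (-(m : ℤ)) N
    · rw [if_pos h, sub_self]
    · rw [Finset.mem_Icc] at h
      rw [if_neg (by rw [Finset.mem_Icc]; omega), hf j (by omega), sub_zero]
  have hfPg : f = P + g := by rw [hg]; ring
  -- The difference f^p - P^p has no coefficients below n
  have hdiff : ∀ x : ℤ, x ≤ (n : ℤ) - 1 → (f ^ p - P ^ p).coeff x = 0 := by
    intro x hx
    have expand : f ^ p = ∑ j ∈ Finset.range (p + 1),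
        P ^ j * g ^ (p - j) * ((p.choose j : ℕ) : LaurentSeries k) := by
      rw [hfPg, add_pow]
    have expand' : f ^ p - P ^ p = ∑ j ∈ Finset.range p,
        P ^ j * g ^ (p - j) * ((p.choose j : ℕ) : LaurentSeries k) := by
      rw [expand, Finset.sum_range_succ, Nat.sub_self, pow_zero, mul_one, Nat.choose_self,
        Nat.cast_one, mul_one, add_sub_cancel_right]
    rw [expand', coeff_sum']
    refine Finset.sum_eq_zero fun j hj => ?_
    rw [Finset.mem_range] at hj
    have hcast : ((p.choose j : ℕ) : LaurentSeries k) = ((p.choose j : ℕ) • (1 : LaurentSeries k)) := by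
      simp [nsmul_eq_mul]
    rw [hcast, mul_smul_comm]
    rw [show ((p.choose j : ℕ) • (P ^ j * g ^ (p - j) * 1)).coeff x
        = (p.choose j : ℕ) • ((P ^ j * g ^ (p - j) * 1).coeff x) from
      map_nsmul (HahnSeries.coeff.addMonoidHom x) _ _]
    rw [mul_one]
    rw [mul_coeff_eq_zero' (P ^ j) (g ^ (p - j)) ((j : ℤ) * (-(m : ℤ)))
      (((p - j : ℕ) : ℤ) * (N + 1)) x
      (pow_coeff_eq_zero' P (-(m : ℤ)) hPlow j)
      (pow_coeff_eq_zero' g (N + 1) hglow (p - j)) ?_, smul_zero]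
    -- the arithmetic inequality
    have hpj : ((p - j : ℕ) : ℤ) = (p : ℤ) - (j : ℤ) := by
      have : j ≤ p := le_of_lt hj
      omega
    rw [hpj, hN]
    have hj' : (j : ℤ) ≤ (p : ℤ) - 1 := by omega
    have hjm : (j : ℤ) * (m : ℤ) ≤ ((p : ℤ) - 1) * (m : ℤ) :=
      mul_le_mul_of_nonneg_right hj' (by positivity)
    have hq1 : (1 : ℤ) ≤ (p : ℤ) - (j : ℤ) := by omega
    have hNpos : (0 : ℤ) ≤ (n : ℤ) + ((p : ℤ) - 1) * (m : ℤ) + 1 := by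
      have : (0:ℤ) ≤ ((p : ℤ) - 1) * (m : ℤ) := mul_nonneg (by omega) (by positivity)
      omega
    have key : ((n : ℤ) + ((p : ℤ) - 1) * (m : ℤ) + 1)
        ≤ ((p : ℤ) - (j : ℤ)) * ((n : ℤ) + ((p : ℤ) - 1) * (m : ℤ) + 1) :=
      le_mul_of_one_le_left hNpos hq1
    nlinarith [key, hjm]
  -- Reduce (f^p * ω).coeff (-1) to (P^p * ω).coeff (-1)
  have hmain : (f ^ p * ω).coeff (-1) = (P ^ p * ω).coeff (-1) := by
    have hsplit : f ^ p * ω = P ^ p * ω + (f ^ p - P ^ p) * ω := by ring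
    rw [hsplit, HahnSeries.coeff_add,
      mul_coeff_eq_zero' (f ^ p - P ^ p) ω (n : ℤ) (-(n : ℤ)) (-1)
        (fun i hi => hdiff i (by omega)) hω (by omega), add_zero]
  -- Compute P^p
  have hPp : P ^ p = ∑ i ∈ Finset.Icc (-(m : ℤ)) N,
      HahnSeries.single ((p : ℤ) * i) ((f.coeff i) ^ p) := by
    rw [hP, sum_pow_char]
    refine Finset.sum_congr rfl fun i _ => ?_
    rw [HahnSeries.single_pow, nsmul_eq_mul]
  have hsingle : ∀ i : ℤ,
      (HahnSeries.single ((p : ℤ) * i) ((f.coeff i) ^ p) * ω).coeff (-1)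
        = (f.coeff i) ^ p * ω.coeff (-1 - (p : ℤ) * i) := by
    intro i
    have h := HahnSeries.coeff_single_mul_add (r := (f.coeff i) ^ p) (x := ω)
      (a := -1 - (p : ℤ) * i) (b := (p : ℤ) * i)
    rw [show (-1 - (p : ℤ) * i) + (p : ℤ) * i = -1 by ring] at h
    exact h
  have hres1 : (f ^ p * ω).coeff (-1)
      = ∑ i ∈ Finset.Icc (-(m : ℤ)) (n : ℤ), (f.coeff i) ^ p * ω.coeff (-1 - p * i) := by
    rw [hmain, hPp, Finset.sum_mul, coeff_sum']
    rw [show ∀ s : Finset ℤ, ∑ i ∈ s, (HahnSeries.single ((p : ℤ) * i)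
        ((f.coeff i) ^ p) * ω).coeff (-1)
        = ∑ i ∈ s, (f.coeff i) ^ p * ω.coeff (-1 - (p : ℤ) * i) from
      fun s => Finset.sum_congr rfl fun i _ => hsingle i]
    refine (Finset.sum_subset (Finset.Icc_subset_Icc le_rfl hnN) fun i hi hi' => ?_).symm
    rw [Finset.mem_Icc] at hi
    rw [Finset.mem_Icc] at hi'
    have hin : (n : ℤ) < i := by omega
    have h0i : (0 : ℤ) ≤ i := by omega
    have h2 : i ≤ (p : ℤ) * i := le_mul_of_one_le_left h0i hp1
    exact mul_eq_zero_of_right _ (hω _ (by linarith))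
  have hres2 : (f * Cω).coeff (-1)
      = ∑ i ∈ Finset.Icc (-(m : ℤ)) (n : ℤ),
          f.coeff i * (frobeniusEquiv k p).symm (ω.coeff (p * (-i) - 1)) := by
    have hCωlow : ∀ c : ℤ, c < -(n : ℤ) → Cω.coeff c = 0 := by
      intro c hc
      have h := hCω (c + 1)
      rw [show c + 1 - 1 = c by ring] at h
      have hc1 : c + 1 ≤ 0 := by omega
      rw [h, hω, map_zero]
      nlinarith [mul_nonneg (sub_nonneg.mpr hp1) (neg_nonneg.mpr hc1)]
    rw [mul_coeff_Icc f Cω (-1) (-(m : ℤ)) (n : ℤ) hf (fun i hi => hCωlow _ (by omega))]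
    refine Finset.sum_congr rfl fun i _ => ?_
    rw [show (-1 - i) = (-i) - 1 by ring, hCω (-i)]
  rw [hres1, hres2, part1]
end

section
/- Let p = 7 and k an algebraically closed field of characteristic 7, with A, B ∈ k nonzero and A ≠ B. Let W be a 6-dimensional k-vector space with basis β_1,…,β_6 and F: W → W the Frobenius-semilinear map (semilinear over x ↦ x⁷) given by F(β_1) = β_3 + 5B β_2, F(β_2)=F(β_3)=F(β_4)=0, F(β_5) = 5AB²β_1 + 5A²B β_5, F(β_6) = 4A³B β_2. Then F⁶(β_i) = 0 for i ∈ {1,2,3,4,6}, F⁶(β_5) ≠ 0, and the stable rank of F (dimension of the image of F⁶) equals 1. -/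
/-- Frobenius action on `H¹` for the plane curve `x⁵ + y³z² + Axyz³ + Bxz⁴ = 0` in
characteristic 7: with `F` the Frobenius-semilinear map given by the stated formulas on a
basis `β_1, …, β_6` (indexed here by `0, …, 5`), one has `F⁶(β_i) = 0` for
`i ∈ {1,2,3,4,6}` (indices `0,1,2,3,5`), `F⁶(β_5) ≠ 0` (index `4`), and the stable rank of
`F` (the dimension of the image of `F⁶`) equals `1`. -/
theorem frobenius_quintic_p_rank
    (k : Type*) [Field k] [IsAlgClosed k] [CharP k 7]
    (A B : k) (hA : A ≠ 0) (hB : B ≠ 0) (hAB : A ≠ B)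
    (F : (Fin 6 → k) → (Fin 6 → k))
    (hadd : ∀ v w, F (v + w) = F v + F w)
    (hsmul : ∀ (c : k) (v), F (c • v) = c ^ 7 • F v)
    (e : Fin 6 → (Fin 6 → k)) (he : ∀ i, e i = Pi.single i 1)
    (h1 : F (e 0) = e 2 + ((5 : k) * B) • e 1)
    (h2 : F (e 1) = 0) (h3 : F (e 2) = 0) (h4 : F (e 3) = 0)
    (h5 : F (e 4) = ((5 : k) * A * B ^ 2) • e 0 + ((5 : k) * A ^ 2 * B) • e 4)
    (h6 : F (e 5) = ((4 : k) * A ^ 3 * B) • e 1) :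
    (∀ i : Fin 6, i ≠ 4 → F^[6] (e i) = 0) ∧ F^[6] (e 4) ≠ 0 ∧
      Module.finrank k (Submodule.span k (Set.range F^[6])) = 1 := by
  have h5ne : (5:k) ≠ 0 := by
    have : ((5:ℕ):k) ≠ 0 := by rw [Ne, CharP.cast_eq_zero_iff k 7]; norm_num
    simpa using this
  have hF0 : F 0 = 0 := by
    have h := hadd 0 0
    rw [add_zero] at h
    nth_rewrite 1 [← add_zero (F 0)] at h
    exact (add_left_cancel h.symm)
  have hiter : ∀ w, F^[6] w = F (F (F (F (F (F w))))) := fun w => rfl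
  -- the one-step formula on the invariant 4-dim subspace
  have hstep : ∀ x y z w : k, F (x • e 0 + y • e 1 + z • e 2 + w • e 4)
      = (w^7*(5*A*B^2)) • e 0 + (x^7*(5*B)) • e 1 + (x^7) • e 2 + (w^7*(5*A^2*B)) • e 4 := by
    intro x y z w
    rw [hadd, hadd, hadd, hsmul, hsmul, hsmul, hsmul, h1, h2, h3, h5]
    module
  have he4 : F (e 4) = ((5:k)*A*B^2) • e 0 + (0:k) • e 1 + (0:k) • e 2 + ((5:k)*A^2*B) • e 4 := by
    rw [h5]; module
  -- F⁶(e 4)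
  have hu : F^[6] (e 4) = F (F (F (F (F (F (e 4)))))) := hiter _
  rw [he4, hstep, hstep, hstep, hstep, hstep] at hu
  -- nonvanishing
  have hb : ((5:k)*A^2*B) ≠ 0 := by
    exact mul_ne_zero (mul_ne_zero h5ne (pow_ne_zero 2 hA)) hB
  have huz : F^[6] (e 4) ≠ 0 := by
    intro h
    rw [hu] at h
    have h4' := congrFun h 4
    simp [he, Pi.single_apply] at h4'
    rcases h4' with (h' | h') | h'
    · exact h5ne h'
    · exact hA h'
    · exact hB h' 
  -- part 1
  have part1 : ∀ i : Fin 6, i ≠ 4 → F^[6] (e i) = 0 := by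
    intro i hi
    fin_cases i
    · show F^[6] (e 0) = 0
      rw [hiter, h1, hadd, hsmul, h3, h2, smul_zero, add_zero, hF0, hF0, hF0, hF0]
    · show F^[6] (e 1) = 0
      rw [hiter, h2, hF0, hF0, hF0, hF0, hF0]
    · show F^[6] (e 2) = 0
      rw [hiter, h3, hF0, hF0, hF0, hF0, hF0]
    · show F^[6] (e 3) = 0
      rw [hiter, h4, hF0, hF0, hF0, hF0, hF0]
    · exact absurd rfl hi
    · show F^[6] (e 5) = 0
      rw [hiter, h6, hsmul, h2, smul_zero, hF0, hF0, hF0, hF0]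
  -- key: every value of F⁶ is a multiple of F⁶(e 4)
  have key : ∀ v : Fin 6 → k, F^[6] v = ((v 4)^(7^6)) • F^[6] (e 4) := by
    intro v
    have hv : v = v 0 • e 0 + v 1 • e 1 + v 2 • e 2 + v 3 • e 3 + v 4 • e 4 + v 5 • e 5 := by
      funext j
      fin_cases j <;> simp [he, Pi.single_apply]
    have hFv : F v = ((v 4)^7*(5*A*B^2)) • e 0
        + ((v 0)^7*(5*B) + (v 5)^7*(4*A^3*B)) • e 1 + ((v 0)^7) • e 2
        + ((v 4)^7*(5*A^2*B)) • e 4 := by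
      conv_lhs => rw [hv]
      rw [hadd, hadd, hadd, hadd, hadd, hsmul, hsmul, hsmul, hsmul, hsmul, hsmul,
        h1, h2, h3, h4, h5, h6]
      module
    rw [hiter, hFv, hstep, hstep, hstep, hstep, hstep, hu]
    match_scalars <;> ring
  -- span equality
  set u := F^[6] (e 4) with hudef
  have hspan : Submodule.span k (Set.range F^[6]) = Submodule.span k {u} := by
    apply le_antisymm
    · rw [Submodule.span_le]
      rintro _ ⟨v, rfl⟩
      rw [SetLike.mem_coe, key v]
      exact Submodule.smul_mem _ _ (Submodule.mem_span_singleton_self u)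
    · rw [Submodule.span_le, Set.singleton_subset_iff]
      exact Submodule.subset_span ⟨e 4, rfl⟩
  refine ⟨part1, huz, ?_⟩
  rw [hspan]
  exact finrank_span_singleton huz
end

section
/- For all integers n ≥ 2 and m ≥ 1, the identity ∑_{t=0}^{n-2} (t+1) · [∑_{i=0}^{n-t-2} (-1)^i C(n+1,i) C((n-t-i-1)m-1, n)] = ∑_{t=0}^{n-2} (-1)^t C(n-1, t) C((n-t-1)m-1, n) holds. -/
open Finset

lemma L1 (N : ℕ) : ∀ k : ℕ, ∑ j ∈ range (k+1), (-1:ℤ)^j * ((N+1).choose j : ℤ)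
    = (-1:ℤ)^k * (N.choose k : ℤ)
  | 0 => by simp
  | (k+1) => by
    rw [Finset.sum_range_succ, L1 N k, Nat.choose_succ_succ N k]
    push_cast
    rw [pow_succ]
    ring

lemma L2 (N : ℕ) : ∀ k : ℕ, ∑ j ∈ range (k+1), ((k:ℤ)+1-j) * ((-1:ℤ)^j * ((N+2).choose j : ℤ))
    = (-1:ℤ)^k * (N.choose k : ℤ)
  | 0 => by simp
  | (k+1) => by
    have h1 : ∑ j ∈ range (k+2), ((k:ℤ)+1+1-j) * ((-1:ℤ)^j * ((N+2).choose j : ℤ))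
        = (∑ j ∈ range (k+2), ((k:ℤ)+1-j) * ((-1:ℤ)^j * ((N+2).choose j : ℤ)))
          + ∑ j ∈ range (k+2), (-1:ℤ)^j * ((N+2).choose j : ℤ) := by
      rw [← Finset.sum_add_distrib]; apply Finset.sum_congr rfl; intro j _; ring
    have h2 : ∑ j ∈ range (k+2), ((k:ℤ)+1-j) * ((-1:ℤ)^j * ((N+2).choose j : ℤ))
        = ∑ j ∈ range (k+1), ((k:ℤ)+1-j) * ((-1:ℤ)^j * ((N+2).choose j : ℤ)) := by
      rw [Finset.sum_range_succ]; push_cast; ring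
    have h3 := L1 (N+1) (k+1)
    push_cast at h3 ⊢
    rw [h1, h2, L2 N k, h3, Nat.choose_succ_succ N k]
    push_cast
    rw [pow_succ]
    ring

lemma L2' (N k : ℕ) : ∑ i ∈ range (k+1), ((i:ℤ)+1) * ((-1:ℤ)^(k-i) * ((N+2).choose (k-i) : ℤ))
    = (-1:ℤ)^k * (N.choose k : ℤ) := by
  have hr := Finset.sum_range_reflect
    (fun j => ((k:ℤ)+1-j) * ((-1:ℤ)^j * ((N+2).choose j : ℤ))) (k+1)
  rw [← L2 N k, ← hr]
  apply Finset.sum_congr rfl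
  intro j hj
  rw [Finset.mem_range] at hj
  have h1 : k + 1 - 1 - j = k - j := by omega
  have h2 : ((k - j : ℕ) : ℤ) = (k:ℤ) - j := by omega
  rw [h1, h2]
  ring

/-- For all integers `n ≥ 2` and `m ≥ 1`,
`∑_{t=0}^{n-2} (t+1) ∑_{i=0}^{n-t-2} (-1)^i C(n+1,i) C((n-t-i-1)m-1, n)
  = ∑_{t=0}^{n-2} (-1)^t C(n-1,t) C((n-t-1)m-1, n)`. -/
theorem basis_cardinality_equals_dimension (n m : ℕ) (hn : 2 ≤ n) (hm : 1 ≤ m) :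
    ∑ t ∈ Finset.range (n - 1), ((t : ℤ) + 1) *
        (∑ i ∈ Finset.range (n - t - 1),
          (-1 : ℤ) ^ i * ((n + 1).choose i : ℤ) * (((n - t - i - 1) * m - 1).choose n : ℤ)) =
      ∑ t ∈ Finset.range (n - 1),
        (-1 : ℤ) ^ t * ((n - 1).choose t : ℤ) * (((n - t - 1) * m - 1).choose n : ℤ) := by
  obtain ⟨N, rfl⟩ : ∃ N, n = N + 2 := ⟨n - 2, by omega⟩
  have hL : ∑ t ∈ Finset.range (N + 1), ((t : ℤ) + 1) *
        (∑ i ∈ Finset.range (N + 1 - t),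
          (-1 : ℤ) ^ i * (((N+2) + 1).choose i : ℤ) * ((((N + 1) - t - i) * m - 1).choose (N+2) : ℤ))
      = ∑ t ∈ Finset.range (N + 2 - 1), ((t : ℤ) + 1) *
        (∑ i ∈ Finset.range ((N+2) - t - 1),
          (-1 : ℤ) ^ i * (((N+2) + 1).choose i : ℤ) * ((((N+2) - t - i - 1) * m - 1).choose (N+2) : ℤ)) := by
    apply Finset.sum_congr (by norm_num)
    intro t ht
    rw [Finset.mem_range] at ht
    congr 1
    apply Finset.sum_congr (by congr 1; omega)
    intro i hi
    rw [Finset.mem_range] at hi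
    rw [show (N+2) - t - i - 1 = (N + 1) - t - i by omega]
  rw [← hL]
  have hflip := Finset.sum_range_diag_flip (N + 1)
    (fun t i => ((t : ℤ) + 1) * ((-1 : ℤ) ^ i * (((N+2) + 1).choose i : ℤ)
      * ((((N + 1) - t - i) * m - 1).choose (N+2) : ℤ)))
  simp only [← Finset.mul_sum] at hflip
  rw [← hflip]
  apply Finset.sum_congr (by norm_num)
  intro k hk
  rw [Finset.mem_range] at hk
  have key : ∑ i ∈ Finset.range (k+1), ((i : ℤ) + 1) * ((-1 : ℤ) ^ (k - i) * (((N+2) + 1).choose (k-i) : ℤ)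
      * ((((N + 1) - i - (k - i)) * m - 1).choose (N+2) : ℤ))
      = (∑ i ∈ Finset.range (k+1), ((i : ℤ) + 1) * ((-1 : ℤ) ^ (k - i) * (((N+1)+2).choose (k-i) : ℤ)))
        * ((((N + 1) - k) * m - 1).choose (N+2) : ℤ) := by
    rw [Finset.sum_mul]
    apply Finset.sum_congr rfl
    intro i hi
    rw [Finset.mem_range] at hi
    rw [show (N + 1) - i - (k - i) = (N + 1) - k by omega,
        show (N+2) + 1 = (N+1) + 2 by omega]
    ring
  rw [key, L2' (N+1) k,
    show (N + 2) - k - 1 = (N + 1) - k by omega,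
    show (N + 2) - 1 = N + 1 by omega]
end

section
/- With the notation f_i = λ_i x_0^m + x_1^m + x_{i+2}^m in k[x_0^{±1},…,x_n^{±1}], and (a_0,…,a_n) positive integers with ∑ a_j = (n-1)m, 0 < a_j ≤ m for j = 2,…,n, and a_0 > m or a_1 > m: the class of f_i · x_0^{-a_0}···x_n^{-a_n} in H^n(P^n, O(-(n-2)m)) (spanned by Laurent monomials with all exponents strictly negative summing to -(n-2)m) is nonzero. -/
open AddMonoidAlgebra

private lemma ama_add_apply {k G : Type*} [Semiring k] (f g : AddMonoidAlgebra k G) (d : G) :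
    (f + g).coeff d = f.coeff d + g.coeff d := rfl

/-- With `f_i = λ_i x_0^m + x_1^m + x_{i+2}^m` in `k[x_0^{±1}, …, x_n^{±1}]`, and
`(a_0, …, a_n)` positive integers with `∑ a_j = (n-1)m`, `0 < a_j ≤ m` for `j = 2, …, n`,
and `a_0 > m` or `a_1 > m`: the class of `f_i · x_0^{-a_0}⋯x_n^{-a_n}` in
`H^n(P^n, O(-(n-2)m))` (spanned by Laurent monomials with all exponents strictly negative)
is nonzero. -/
theorem fermat_relation_nonzero_class
    (k : Type*) [Field k] (n m : ℕ) (hn : 3 ≤ n) (hm : 1 ≤ m)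
    (lam : ℕ → k) (hlam0 : ∀ i ≤ n - 2, lam i ≠ 0)
    (hlam : ∀ i ≤ n - 2, ∀ j ≤ n - 2, i ≠ j → lam i ≠ lam j)
    (f : ∀ i : ℕ, i ≤ n - 2 → AddMonoidAlgebra k (Fin (n + 1) →₀ ℤ))
    (hf : ∀ (i : ℕ) (hi : i ≤ n - 2), f i hi =
      AddMonoidAlgebra.single (Finsupp.single (0 : Fin (n + 1)) (m : ℤ)) (lam i) +
      AddMonoidAlgebra.single (Finsupp.single (1 : Fin (n + 1)) (m : ℤ)) 1 +
      AddMonoidAlgebra.single (Finsupp.single (⟨i + 2, by omega⟩ : Fin (n + 1)) (m : ℤ)) 1)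
    (a : Fin (n + 1) → ℕ) (ha1 : ∀ j, 1 ≤ a j)
    (ham : ∀ j : Fin (n + 1), 2 ≤ (j : ℕ) → a j ≤ m)
    (h01 : m < a 0 ∨ m < a 1)
    (hsum : ∑ j, a j = (n - 1) * m)
    (A : Fin (n + 1) →₀ ℤ) (hA : ∀ j, A j = -(a j : ℤ)) :
    ∀ (i : ℕ) (hi : i ≤ n - 2), ∃ d : Fin (n + 1) →₀ ℤ,
      (∀ j, d j < 0) ∧ (f i hi * AddMonoidAlgebra.single A (1 : k)).coeff d ≠ 0 := by
  intro i hi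
  have hmZ : (m : ℤ) ≠ 0 := by exact_mod_cast Nat.one_le_iff_ne_zero.mp hm
  set v : Fin (n + 1) := (⟨i + 2, by omega⟩ : Fin (n + 1)) with hv
  have h1v : ((1 : Fin (n + 1)) : ℕ) = 1 := by
    rw [Fin.val_one']; exact Nat.mod_eq_of_lt (by omega)
  have h01ne : (0 : Fin (n + 1)) ≠ 1 := by
    intro h; have := congrArg Fin.val h
    rw [Fin.val_zero, h1v] at this; omega
  have hv0 : v ≠ 0 := by
    intro h; have := congrArg Fin.val h
    rw [Fin.val_zero] at this; simp only [hv] at this; omega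
  have hv1 : v ≠ 1 := by
    intro h; have := congrArg Fin.val h
    rw [h1v] at this; simp only [hv] at this; omega
  have hprod : f i hi * AddMonoidAlgebra.single A (1 : k) =
      AddMonoidAlgebra.single (Finsupp.single (0 : Fin (n + 1)) (m : ℤ) + A) (lam i) +
      AddMonoidAlgebra.single (Finsupp.single (1 : Fin (n + 1)) (m : ℤ) + A) 1 +
      AddMonoidAlgebra.single (Finsupp.single v (m : ℤ) + A) 1 := by
    rw [hf i hi, add_mul, add_mul, AddMonoidAlgebra.single_mul_single,
      AddMonoidAlgebra.single_mul_single, AddMonoidAlgebra.single_mul_single]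
    simp only [mul_one]
    rfl
  rcases h01 with h0 | h1
  · refine ⟨Finsupp.single (0 : Fin (n + 1)) (m : ℤ) + A, ?_, ?_⟩
    · intro j
      rw [Finsupp.add_apply, Finsupp.single_apply, hA j]
      by_cases hj : (0 : Fin (n + 1)) = j
      · subst hj; simp only [if_pos rfl]; omega
      · rw [if_neg hj]; have := ha1 j; omega
    · rw [hprod]
      classical
      rw [ama_add_apply, ama_add_apply, AddMonoidAlgebra.coeff_single_apply,
        AddMonoidAlgebra.coeff_single_apply, AddMonoidAlgebra.coeff_single_apply,
        if_pos rfl, if_neg, if_neg]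
      · simp only [add_zero]; exact hlam0 i hi
      · intro h
        exact hv0 ((Finsupp.single_left_inj hmZ).mp (add_right_cancel h))
      · intro h
        exact h01ne (((Finsupp.single_left_inj hmZ).mp (add_right_cancel h)).symm)
  · refine ⟨Finsupp.single (1 : Fin (n + 1)) (m : ℤ) + A, ?_, ?_⟩
    · intro j
      rw [Finsupp.add_apply, Finsupp.single_apply, hA j]
      by_cases hj : (1 : Fin (n + 1)) = j
      · subst hj; simp only [if_pos rfl]; omega
      · rw [if_neg hj]; have := ha1 j; omega
    · rw [hprod]
      classical
      rw [ama_add_apply, ama_add_apply, AddMonoidAlgebra.coeff_single_apply,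
        AddMonoidAlgebra.coeff_single_apply, AddMonoidAlgebra.coeff_single_apply,
        if_neg, if_pos rfl, if_neg]
      · simp only [add_zero, zero_add]; exact one_ne_zero
      · intro h
        exact hv1 ((Finsupp.single_left_inj hmZ).mp (add_right_cancel h))
      · intro h
        exact h01ne ((Finsupp.single_left_inj hmZ).mp (add_right_cancel h))
end

section
/- Let p = 2, k algebraically closed of characteristic 2, and consider the semilinear Frobenius map F* on the span of classes x_0^{-a_0}···x_n^{-a_n} indexed by S(0,0) (positive a_j, ∑ a_j = (n-1)m, a_j ≤ m, m odd), given by F*(x^{-a}) = (∏_{i=0}^{n-2} f_i) · x^{-2a} projected to monomials with all exponents negative, where f_i = λ_i x_0^m + x_1^m + x_{i+2}^m. Then F*(x_0^{-a_0}···x_n^{-a_n}) = 0 if and only if at least three of the a_j satisfy a_j ≤ (m-1)/2. -/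
open MvPolynomial Finset

section helpers
variable {k : Type*} [Field k]

private def pos' (n : ℕ) (i : Fin (n-1)) (c : Fin 3) : Fin (n+1) :=
  if c = 0 then 0 else if c = 1 then 1 else ⟨(i:ℕ)+2, by have := i.isLt; omega⟩

private lemma pos'_0 (n : ℕ) (i : Fin (n-1)) : pos' n i 0 = 0 := rfl
private lemma pos'_1 (n : ℕ) (i : Fin (n-1)) : pos' n i 1 = 1 := rfl
private lemma pos'_2 (n : ℕ) (i : Fin (n-1)) :
    pos' n i 2 = ⟨(i:ℕ)+2, by have := i.isLt; omega⟩ := rfl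

private lemma prod_monomial' {σ R ι : Type*} [CommSemiring R] (s : Finset ι)
    (e : ι → σ →₀ ℕ) (c : ι → R) :
    ∏ i ∈ s, monomial (e i) (c i) = monomial (∑ i ∈ s, e i) (∏ i ∈ s, c i) := by
  classical
  induction s using Finset.induction_on with
  | empty => simp
  | insert _ _ h ih =>
      rw [Finset.prod_insert h, Finset.sum_insert h, Finset.prod_insert h, ih, monomial_mul]

private lemma expandP {k : Type*} [Field k] (n m : ℕ) (lam : Fin (n-1) → k) :
    (∏ i : Fin (n - 1),
      (MvPolynomial.C (lam i) * MvPolynomial.X 0 ^ m + MvPolynomial.X 1 ^ m +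
        MvPolynomial.X (⟨(i : ℕ) + 2, by have := i.isLt; omega⟩ : Fin (n + 1)) ^ m))
    = ∑ g : Fin (n-1) → Fin 3,
        monomial (∑ i, Finsupp.single (pos' n i (g i)) m)
          (∏ i, if g i = 0 then lam i else 1) := by
  classical
  have hfac : ∀ i : Fin (n-1),
      (MvPolynomial.C (lam i) * MvPolynomial.X 0 ^ m + MvPolynomial.X 1 ^ m +
        MvPolynomial.X (⟨(i : ℕ) + 2, by have := i.isLt; omega⟩ : Fin (n + 1)) ^ m)
      = ∑ c : Fin 3, monomial (Finsupp.single (pos' n i c) m) (if c = 0 then lam i else 1) := by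
    intro i
    rw [Fin.sum_univ_three]
    have h2 : (2 : Fin 3) ≠ 0 := by decide
    simp [pos'_0, pos'_1, pos'_2, X_pow_eq_monomial, C_mul_monomial, h2]
  calc (∏ i : Fin (n - 1),
      (MvPolynomial.C (lam i) * MvPolynomial.X 0 ^ m + MvPolynomial.X 1 ^ m +
        MvPolynomial.X (⟨(i : ℕ) + 2, by have := i.isLt; omega⟩ : Fin (n + 1)) ^ m))
      = ∏ i : Fin (n-1), ∑ c : Fin 3, monomial (Finsupp.single (pos' n i c) m)
          (if c = 0 then lam i else 1) := Finset.prod_congr rfl (fun i _ => hfac i)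
    _ = ∑ g ∈ Fintype.piFinset (fun _ : Fin (n-1) => (univ : Finset (Fin 3))),
          ∏ i, monomial (Finsupp.single (pos' n i (g i)) m) (if g i = 0 then lam i else 1) :=
        Finset.prod_univ_sum _ _
    _ = ∑ g : Fin (n-1) → Fin 3,
        monomial (∑ i, Finsupp.single (pos' n i (g i)) m)
          (∏ i, if g i = 0 then lam i else 1) := by
        rw [Fintype.piFinset_univ]
        exact Finset.sum_congr rfl (fun g _ => prod_monomial' _ _ _)

-- basic Fin facts
private lemma fin_val1 (n : ℕ) (hn : 3 ≤ n) : ((1 : Fin (n+1)) : ℕ) = 1 := by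
  rw [Fin.val_one']
  exact Nat.mod_eq_of_lt (by omega)

private lemma fin3cases : ∀ c : Fin 3, c = 0 ∨ c = 1 ∨ c = 2 := by decide

end helpers

/-- In characteristic 2, for a tuple `(a_0, …, a_n) ∈ S(0,0)` (positive entries,
`∑ a_j = (n-1)m`, `a_j ≤ m`, `m` odd), the Frobenius image
`F*(x^{-a}) = (∏_{i=0}^{n-2} f_i) · x^{-2a}`, projected onto Laurent monomials with all
exponents negative, vanishes if and only if at least three of the `a_j` satisfy
`a_j ≤ (m-1)/2`.  Vanishing of the projection means that every monomial `x^d` occurring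
in `P = ∏ f_i` has some exponent `d_j ≥ 2 a_j`.  (The `λ_i` are taken generic, i.e.
algebraically independent over `F_2`, so that no cancellation occurs.) -/
theorem frobenius_vanishing_on_B00
    (k : Type*) [Field k] [CharP k 2] (n m : ℕ) (hn : 3 ≤ n) (hm3 : 3 ≤ m) (hm : Odd m)
    (lam : Fin (n - 1) → k) (hlam0 : ∀ i, lam i ≠ 0)
    (hlam : Function.Injective lam)
    (hindep : ∀ q : MvPolynomial (Fin (n - 1)) (ZMod 2),
      MvPolynomial.eval₂ (ZMod.castHom (dvd_refl 2) k) lam q = 0 → q = 0)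
    (P : MvPolynomial (Fin (n + 1)) k)
    (hP : P = ∏ i : Fin (n - 1),
      (MvPolynomial.C (lam i) * MvPolynomial.X 0 ^ m + MvPolynomial.X 1 ^ m +
        MvPolynomial.X (⟨(i : ℕ) + 2, by have := i.isLt; omega⟩ : Fin (n + 1)) ^ m))
    (a : Fin (n + 1) → ℕ) (ha1 : ∀ j, 1 ≤ a j) (ham : ∀ j, a j ≤ m)
    (hsum : ∑ j, a j = (n - 1) * m) :
    (∀ d : Fin (n + 1) →₀ ℕ, MvPolynomial.coeff d P ≠ 0 → ∃ j, 2 * a j ≤ d j) ↔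
      3 ≤ (Finset.univ.filter fun j : Fin (n + 1) => a j ≤ (m - 1) / 2).card := by
  classical
  obtain ⟨t, htm⟩ := hm
  -- abbreviations
  set pos : Fin (n-1) → Fin 3 → Fin (n+1) := pos' n with hposdef
  set D : (Fin (n-1) → Fin 3) → (Fin (n+1) →₀ ℕ) :=
    fun g => ∑ i, Finsupp.single (pos i (g i)) m with hDdef
  set Cf : (Fin (n-1) → Fin 3) → k := fun g => ∏ i, if g i = 0 then lam i else 1 with hCfdef
  have hPexp : P = ∑ g : Fin (n-1) → Fin 3, monomial (D g) (Cf g) := by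
    rw [hP]; exact expandP n m lam
  have hcoeff : ∀ d : Fin (n+1) →₀ ℕ,
      coeff d P = ∑ g : Fin (n-1) → Fin 3, if D g = d then Cf g else 0 := by
    intro d
    rw [hPexp, coeff_sum]
    exact Finset.sum_congr rfl fun g _ => coeff_monomial d (D g) (Cf g)
  have hDapp : ∀ (g : Fin (n-1) → Fin 3) (j : Fin (n+1)),
      D g j = ∑ i, if pos i (g i) = j then m else 0 := by
    intro g j
    rw [hDdef]
    rw [Finsupp.finset_sum_apply]
    exact Finset.sum_congr rfl fun i _ => Finsupp.single_apply
  have hι2ne0 : ∀ i : Fin (n-1), pos i 2 ≠ 0 := by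
    intro i h
    have := congrArg Fin.val h
    rw [hposdef, pos'_2] at this
    simp at this
  have hι2ne1 : ∀ i : Fin (n-1), pos i 2 ≠ 1 := by
    intro i h
    have := congrArg Fin.val h
    rw [hposdef, pos'_2, fin_val1 n hn] at this
    simp at this
  have h0ne1 : (0 : Fin (n+1)) ≠ 1 := by
    intro h
    have := congrArg Fin.val h
    rw [fin_val1 n hn] at this
    simp at this
  have hι2inj : ∀ i i' : Fin (n-1), pos i 2 = pos i' 2 → i = i' := by
    intro i i' h
    have := congrArg Fin.val h
    rw [hposdef, pos'_2, pos'_2] at this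
    simp at this
    exact Fin.ext this
  -- value of pos by cases
  have hposval : ∀ (i : Fin (n-1)) (c : Fin 3), c ≠ 2 → pos i c = 0 ∨ pos i c = 1 := by
    intro i c hc
    rcases fin3cases c with h | h | h
    · left; rw [h]; rfl
    · right; rw [h]; rfl
    · exact absurd h hc
  constructor
  · -- hard direction
    intro hvan
    by_contra h3
    push_neg at h3
    have hcards : (univ.filter fun j : Fin (n+1) => a j ≤ (m-1)/2).card
        + (univ.filter fun j : Fin (n+1) => ¬ (a j ≤ (m-1)/2)).card = n + 1 := by
      rw [Finset.card_filter_add_card_filter_not, card_univ, Fintype.card_fin]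
    have hLgcard : n - 1 ≤ (univ.filter fun j : Fin (n+1) => ¬ (a j ≤ (m-1)/2)).card := by omega
    obtain ⟨T, hTsub, hTcard⟩ := Finset.exists_subset_card_eq hLgcard
    set d : Fin (n+1) →₀ ℕ := ∑ j ∈ T, Finsupp.single j m with hddef
    have hdapp : ∀ j, d j = if j ∈ T then m else 0 := by
      intro j
      rw [hddef, Finsupp.finset_sum_apply]
      have hterm : ∀ j' ∈ T, (Finsupp.single j' m) j = if j' = j then m else 0 :=
        fun j' _ => Finsupp.single_apply
      rw [Finset.sum_congr rfl hterm, Finset.sum_ite_eq' T j (fun _ => m)]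
    have hTlarge : ∀ j ∈ T, ¬ (a j ≤ (m-1)/2) := by
      intro j hj
      have := hTsub hj
      rw [Finset.mem_filter] at this
      exact this.2
    have hdlt : ∀ j, d j < 2 * a j := by
      intro j
      rw [hdapp]
      by_cases hj : j ∈ T
      · rw [if_pos hj]; have := hTlarge j hj; omega
      · rw [if_neg hj]; have := ha1 j; omega
    have hpos0 : ∀ i : Fin (n-1), pos i 0 = 0 := by intro i; rw [hposdef]; rfl
    have hpos1 : ∀ i : Fin (n-1), pos i 1 = 1 := by intro i; rw [hposdef]; rfl
    -- every g with D g = d maps into T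
    have hintoT : ∀ g : Fin (n-1) → Fin 3, D g = d → ∀ i, pos i (g i) ∈ T := by
      intro g hgd i
      by_contra hnot
      have h1 : m ≤ D g (pos i (g i)) := by
        rw [hDapp]
        calc m = if pos i (g i) = pos i (g i) then m else 0 := by rw [if_pos rfl]
          _ ≤ _ := Finset.single_le_sum
              (f := fun i' => if pos i' (g i') = pos i (g i) then m else 0)
              (fun _ _ => Nat.zero_le _) (Finset.mem_univ i)
      rw [hgd, hdapp, if_neg hnot] at h1
      omega
    have hinjT : ∀ g : Fin (n-1) → Fin 3, D g = d →
        ∀ i1 i2, pos i1 (g i1) = pos i2 (g i2) → i1 = i2 := by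
      intro g hgd i1 i2 heq
      by_contra hne
      have key : m + m ≤ ∑ i, if pos i (g i) = pos i1 (g i1) then m else 0 := by
        have h := Finset.sum_le_sum_of_subset
          (f := fun i => if pos i (g i) = pos i1 (g i1) then m else 0)
          (Finset.subset_univ ({i1, i2} : Finset (Fin (n-1))))
        rwa [Finset.sum_pair hne, if_pos rfl, if_pos heq.symm] at h
      have h1 : D g (pos i1 (g i1)) = d (pos i1 (g i1)) := by rw [hgd]
      rw [hDapp, hdapp] at h1
      by_cases h : pos i1 (g i1) ∈ T
      · rw [if_pos h] at h1; omega
      · rw [if_neg h] at h1; omega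
    have himageT : ∀ g : Fin (n-1) → Fin 3, D g = d → ∀ j ∈ T, ∃ i, pos i (g i) = j := by
      intro g hgd j hj
      have hsub2 : Finset.image (fun i => pos i (g i)) univ ⊆ T := by
        intro j' hj'
        obtain ⟨i, -, rfl⟩ := Finset.mem_image.mp hj'
        exact hintoT g hgd i
      have hcardim : (Finset.image (fun i => pos i (g i)) univ).card = n - 1 := by
        rw [Finset.card_image_of_injective _ (fun i1 i2 h => hinjT g hgd i1 i2 h),
          card_univ, Fintype.card_fin]
      have hTimg : T = Finset.image (fun i => pos i (g i)) univ :=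
        (Finset.eq_of_subset_of_card_le hsub2 (by omega)).symm
      rw [hTimg] at hj
      obtain ⟨i, -, hi⟩ := Finset.mem_image.mp hj
      exact ⟨i, hi⟩
    have hDeq : ∀ g : Fin (n-1) → Fin 3,
        (∀ i1 i2, pos i1 (g i1) = pos i2 (g i2) → i1 = i2) →
        (∀ i, pos i (g i) ∈ T) → D g = d := by
      intro g hinj hmemT
      have hsub2 : Finset.image (fun i => pos i (g i)) univ ⊆ T := by
        intro j' hj'
        obtain ⟨i, -, rfl⟩ := Finset.mem_image.mp hj'
        exact hmemT i
      have hcardim : (Finset.image (fun i => pos i (g i)) univ).card = n - 1 := by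
        rw [Finset.card_image_of_injective _ (fun i1 i2 h => hinj i1 i2 h),
          card_univ, Fintype.card_fin]
      have hTimg : T = Finset.image (fun i => pos i (g i)) univ :=
        (Finset.eq_of_subset_of_card_le hsub2 (by omega)).symm
      ext j
      rw [hDapp, hdapp]
      by_cases hj : j ∈ T
      · rw [if_pos hj]
        rw [hTimg] at hj
        obtain ⟨i0, -, hi0⟩ := Finset.mem_image.mp hj
        rw [Finset.sum_eq_single_of_mem i0 (Finset.mem_univ i0)
          (fun i _ hne => if_neg (fun hcontra => hne (hinj i i0 (by rw [hcontra, hi0]))))]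
        exact if_pos hi0
      · rw [if_neg hj]
        exact Finset.sum_eq_zero (fun i _ => if_neg (fun hcontra => hj (by rw [← hcontra]; exact hmemT i)))
    have hforce2 : ∀ g : Fin (n-1) → Fin 3, D g = d → ∀ i, pos i 2 ∈ T → g i = 2 := by
      intro g hgd i hiT
      obtain ⟨i', hi'⟩ := himageT g hgd (pos i 2) hiT
      rcases fin3cases (g i') with hc | hc | hc
      · rw [hc, hpos0] at hi'; exact absurd hi'.symm (hι2ne0 i)
      · rw [hc, hpos1] at hi'; exact absurd hi'.symm (hι2ne1 i)
      · rw [hc] at hi'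
        have := hι2inj i' i hi'
        rw [← this]
        exact hc
    have hnot2 : ∀ g : Fin (n-1) → Fin 3, D g = d → ∀ i, pos i 2 ∉ T → g i ≠ 2 := by
      intro g hgd i hiT hc
      have := hintoT g hgd i
      rw [hc] at this
      exact hiT this
    have hval0T : ∀ g : Fin (n-1) → Fin 3, D g = d → ∀ i, g i = 0 → (0 : Fin (n+1)) ∈ T := by
      intro g hgd i hc
      have := hintoT g hgd i
      rwa [hc, hpos0] at this
    have hval1T : ∀ g : Fin (n-1) → Fin 3, D g = d → ∀ i, g i = 1 → (1 : Fin (n+1)) ∈ T := by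
      intro g hgd i hc
      have := hintoT g hgd i
      rwa [hc, hpos1] at this
    have hcoeffd : coeff d P = ∑ g ∈ univ.filter (fun g : Fin (n-1) → Fin 3 => D g = d), Cf g := by
      rw [hcoeff d]
      exact (Finset.sum_filter _ _).symm
    -- counting: card of "free" indices
    have hval2 : ∀ i : Fin (n-1), ((pos i 2 : Fin (n+1)) : ℕ) = (i:ℕ) + 2 := by
      intro i; rw [hposdef, pos'_2]
    have hlowA : ∀ j : Fin (n+1), ((j:ℕ) < 2) ↔ (j = 0 ∨ j = 1) := by
      intro j
      constructor
      · intro hj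
        have hj01 : (j:ℕ) = 0 ∨ (j:ℕ) = 1 := by omega
        rcases hj01 with h | h
        · left; apply Fin.ext; rw [h]; rfl
        · right; apply Fin.ext; rw [h, fin_val1 n hn]
      · rintro (rfl | rfl)
        · simp
        · rw [fin_val1 n hn]; omega
    have hMeq : (univ.filter (fun i : Fin (n-1) => pos i 2 ∈ T)).card
        = (T.filter (fun j : Fin (n+1) => 2 ≤ (j:ℕ))).card := by
      apply Finset.card_bij (fun i _ => pos i 2)
      · intro i hi
        rw [Finset.mem_filter] at hi ⊢
        exact ⟨hi.2, by rw [hval2]; omega⟩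
      · intro i1 h1' i2 h2' h
        exact hι2inj i1 i2 h
      · intro j hj
        rw [Finset.mem_filter] at hj
        have hjlt := j.isLt
        refine ⟨⟨(j:ℕ) - 2, by omega⟩, ?_, ?_⟩
        · rw [Finset.mem_filter]
          refine ⟨Finset.mem_univ _, ?_⟩
          have : pos ⟨(j:ℕ) - 2, by omega⟩ 2 = j := by
            apply Fin.ext
            rw [hval2]
            simp
            omega
          rw [this]
          exact hj.1
        · apply Fin.ext
          rw [hval2]
          simp
          omega
    have hMsplit : (univ.filter (fun i : Fin (n-1) => pos i 2 ∈ T)).card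
        + (univ.filter (fun i : Fin (n-1) => ¬ (pos i 2 ∈ T))).card = n - 1 := by
      rw [Finset.card_filter_add_card_filter_not, card_univ, Fintype.card_fin]
    have hTsplit : (T.filter (fun j : Fin (n+1) => 2 ≤ (j:ℕ))).card
        + (T.filter (fun j : Fin (n+1) => ¬ (2 ≤ (j:ℕ)))).card = n - 1 := by
      rw [Finset.card_filter_add_card_filter_not, hTcard]
    have hcne : coeff d P ≠ 0 := by
      by_cases h0 : (0 : Fin (n+1)) ∈ T <;> by_cases h1 : (1 : Fin (n+1)) ∈ T
      · -- case D
        have hloweq : T.filter (fun j : Fin (n+1) => ¬ (2 ≤ (j:ℕ))) = {0, 1} := by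
          ext j
          rw [Finset.mem_filter, Finset.mem_insert, Finset.mem_singleton]
          constructor
          · rintro ⟨hjT, hj2⟩
            exact (hlowA j).mp (by omega)
          · rintro (rfl | rfl)
            · refine ⟨h0, ?_⟩
              rw [show ((0 : Fin (n+1)) : ℕ) = 0 from rfl]
              omega
            · refine ⟨h1, ?_⟩
              rw [fin_val1 n hn]
              omega
        have hMcard : (univ.filter (fun i : Fin (n-1) => ¬ (pos i 2 ∈ T))).card = 2 := by
          rw [hloweq, Finset.card_insert_of_notMem (by simp [h0ne1]),
            Finset.card_singleton] at hTsplit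
          omega
        obtain ⟨i1, i2, hi12, hM⟩ := Finset.card_eq_two.mp hMcard
        have hmemM : ∀ i : Fin (n-1), pos i 2 ∉ T ↔ (i = i1 ∨ i = i2) := by
          intro i
          constructor
          · intro hc
            have h' : i ∈ univ.filter (fun i : Fin (n-1) => ¬ (pos i 2 ∈ T)) :=
              Finset.mem_filter.mpr ⟨Finset.mem_univ i, hc⟩
            rw [hM] at h'
            simpa using h'
          · intro hc
            have h' : i ∈ univ.filter (fun i : Fin (n-1) => ¬ (pos i 2 ∈ T)) := by
              rw [hM]; simpa using hc
            exact (Finset.mem_filter.mp h').2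
        have hotherT : ∀ i, i ≠ i1 → i ≠ i2 → pos i 2 ∈ T := by
          intro i u v
          by_contra hc
          rcases (hmemM i).mp hc with rfl | rfl
          exacts [u rfl, v rfl]
        have hi1T : pos i1 2 ∉ T := (hmemM i1).mpr (Or.inl rfl)
        have hi2T : pos i2 2 ∉ T := (hmemM i2).mpr (Or.inr rfl)
        set gA : Fin (n-1) → Fin 3 := fun i => if i = i1 then 0 else if i = i2 then 1 else 2
          with hgA
        set gB : Fin (n-1) → Fin 3 := fun i => if i = i1 then 1 else if i = i2 then 0 else 2
          with hgB
        have hgAi1 : gA i1 = 0 := by rw [hgA]; simp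
        have hgAi2 : gA i2 = 1 := by rw [hgA]; simp [hi12.symm]
        have hgAo : ∀ i, i ≠ i1 → i ≠ i2 → gA i = 2 := by
          intro i u v; rw [hgA]; simp [u, v]
        have hgBi1 : gB i1 = 1 := by rw [hgB]; simp
        have hgBi2 : gB i2 = 0 := by rw [hgB]; simp [hi12.symm]
        have hgBo : ∀ i, i ≠ i1 → i ≠ i2 → gB i = 2 := by
          intro i u v; rw [hgB]; simp [u, v]
        have hinj01 : ∀ (g : Fin (n-1) → Fin 3), pos i1 (g i1) ≠ pos i2 (g i2) →
            (pos i1 (g i1) = 0 ∨ pos i1 (g i1) = 1) →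
            (pos i2 (g i2) = 0 ∨ pos i2 (g i2) = 1) →
            (∀ i, i ≠ i1 → i ≠ i2 → g i = 2) →
            ∀ x y, pos x (g x) = pos y (g y) → x = y := by
          intro g hne h1' h2' ho x y h
          by_cases hx1 : x = i1
          · by_cases hy1 : y = i1
            · rw [hx1, hy1]
            · by_cases hy2 : y = i2
              · exfalso; rw [hx1, hy2] at h; exact hne h
              · exfalso
                rw [ho y hy1 hy2, hx1] at h
                rcases h1' with hv | hv <;> rw [hv] at h
                · exact hι2ne0 y h.symm
                · exact hι2ne1 y h.symm
          · by_cases hx2 : x = i2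
            · by_cases hy1 : y = i1
              · exfalso; rw [hx2, hy1] at h; exact hne h.symm
              · by_cases hy2 : y = i2
                · rw [hx2, hy2]
                · exfalso
                  rw [ho y hy1 hy2, hx2] at h
                  rcases h2' with hv | hv <;> rw [hv] at h
                  · exact hι2ne0 y h.symm
                  · exact hι2ne1 y h.symm
            · by_cases hy1 : y = i1
              · exfalso
                rw [ho x hx1 hx2, hy1] at h
                rcases h1' with hv | hv <;> rw [hv] at h
                · exact hι2ne0 x h
                · exact hι2ne1 x h
              · by_cases hy2 : y = i2
                · exfalso
                  rw [ho x hx1 hx2, hy2] at h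
                  rcases h2' with hv | hv <;> rw [hv] at h
                  · exact hι2ne0 x h
                  · exact hι2ne1 x h
                · rw [ho x hx1 hx2, ho y hy1 hy2] at h
                  exact hι2inj x y h
        have hmem' : ∀ (g : Fin (n-1) → Fin 3), pos i1 (g i1) ∈ T → pos i2 (g i2) ∈ T →
            (∀ i, i ≠ i1 → i ≠ i2 → g i = 2) → ∀ i, pos i (g i) ∈ T := by
          intro g hA hB ho i
          by_cases u : i = i1
          · rw [u]; exact hA
          · by_cases v : i = i2
            · rw [v]; exact hB
            · rw [ho i u v]; exact hotherT i u v
        have hDgA : D gA = d := by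
          apply hDeq
          · apply hinj01
            · rw [hgAi1, hgAi2, hpos0, hpos1]; exact h0ne1
            · rw [hgAi1, hpos0]; exact Or.inl rfl
            · rw [hgAi2, hpos1]; exact Or.inr rfl
            · exact hgAo
          · apply hmem'
            · rw [hgAi1, hpos0]; exact h0
            · rw [hgAi2, hpos1]; exact h1
            · exact hgAo
        have hDgB : D gB = d := by
          apply hDeq
          · apply hinj01
            · rw [hgBi1, hgBi2, hpos1, hpos0]; exact fun h => h0ne1 h.symm
            · rw [hgBi1, hpos1]; exact Or.inr rfl
            · rw [hgBi2, hpos0]; exact Or.inl rfl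
            · exact hgBo
          · apply hmem'
            · rw [hgBi1, hpos1]; exact h1
            · rw [hgBi2, hpos0]; exact h0
            · exact hgBo
        have hfib : univ.filter (fun g : Fin (n-1) → Fin 3 => D g = d) = {gA, gB} := by
          ext g
          simp only [Finset.mem_filter, Finset.mem_univ, true_and, Finset.mem_insert,
            Finset.mem_singleton]
          constructor
          · intro hgd
            have hne1' : g i1 ≠ 2 := hnot2 g hgd i1 hi1T
            have hne2' : g i2 ≠ 2 := hnot2 g hgd i2 hi2T
            have hoth : ∀ i, i ≠ i1 → i ≠ i2 → g i = 2 :=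
              fun i u v => hforce2 g hgd i (hotherT i u v)
            rcases fin3cases (g i1) with hc1 | hc1 | hc1 <;>
              rcases fin3cases (g i2) with hc2 | hc2 | hc2
            · exfalso
              apply hi12
              apply hinjT g hgd
              rw [hc1, hc2, hpos0, hpos0]
            · left
              funext i
              by_cases u : i = i1
              · rw [u, hc1, hgAi1]
              · by_cases v : i = i2
                · rw [v, hc2, hgAi2]
                · rw [hoth i u v, hgAo i u v]
            · exact absurd hc2 hne2'
            · right
              funext i
              by_cases u : i = i1
              · rw [u, hc1, hgBi1]
              · by_cases v : i = i2
                · rw [v, hc2, hgBi2]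
                · rw [hoth i u v, hgBo i u v]
            · exfalso
              apply hi12
              apply hinjT g hgd
              rw [hc1, hc2, hpos1, hpos1]
            · exact absurd hc2 hne2'
            · exact absurd hc1 hne1'
            · exact absurd hc1 hne1'
            · exact absurd hc1 hne1'
          · rintro (rfl | rfl)
            exacts [hDgA, hDgB]
        have hAB : gA ≠ gB := by
          intro h
          have := congrFun h i1
          rw [hgAi1, hgBi1] at this
          exact absurd this (by decide)
        have hCfgA : Cf gA = lam i1 := by
          simp only [hCfdef]
          have hterm : ∀ i ∈ univ, (if gA i = 0 then lam i else 1)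
              = if i = i1 then lam i else 1 := by
            intro i _
            by_cases u : i = i1
            · rw [if_pos u, u, hgAi1, if_pos rfl]
            · rw [if_neg u]
              by_cases v : i = i2
              · rw [v, hgAi2, if_neg (show (1 : Fin 3) ≠ 0 by decide)]
              · rw [hgAo i u v, if_neg (show (2 : Fin 3) ≠ 0 by decide)]
          rw [Finset.prod_congr rfl hterm, Finset.prod_ite_eq' univ i1 lam,
            if_pos (Finset.mem_univ i1)]
        have hCfgB : Cf gB = lam i2 := by
          simp only [hCfdef]
          have hterm : ∀ i ∈ univ, (if gB i = 0 then lam i else 1)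
              = if i = i2 then lam i else 1 := by
            intro i _
            by_cases v : i = i2
            · rw [if_pos v, v, hgBi2, if_pos rfl]
            · rw [if_neg v]
              by_cases u : i = i1
              · rw [u, hgBi1, if_neg (show (1 : Fin 3) ≠ 0 by decide)]
              · rw [hgBo i u v, if_neg (show (2 : Fin 3) ≠ 0 by decide)]
          rw [Finset.prod_congr rfl hterm, Finset.prod_ite_eq' univ i2 lam,
            if_pos (Finset.mem_univ i2)]
        rw [hcoeffd, hfib, Finset.sum_pair hAB, hCfgA, hCfgB]
        intro hzero
        have heq2 : lam i1 = lam i2 := by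
          have h' := eq_neg_of_add_eq_zero_left hzero
          rwa [CharTwo.neg_eq] at h'
        exact hi12 (hlam heq2)

      · -- case B
        have hloweq : T.filter (fun j : Fin (n+1) => ¬ (2 ≤ (j:ℕ))) = {0} := by
          ext j
          rw [Finset.mem_filter, Finset.mem_singleton]
          constructor
          · rintro ⟨hjT, hj2⟩
            rcases (hlowA j).mp (by omega) with rfl | rfl
            · rfl
            · exact absurd hjT h1
          · rintro rfl
            refine ⟨h0, ?_⟩
            rw [show ((0 : Fin (n+1)) : ℕ) = 0 from rfl]
            omega
        have hMcard : (univ.filter (fun i : Fin (n-1) => ¬ (pos i 2 ∈ T))).card = 1 := by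
          rw [hloweq, Finset.card_singleton] at hTsplit
          omega
        obtain ⟨i0, hM⟩ := Finset.card_eq_one.mp hMcard
        have hi0mem : pos i0 2 ∉ T := by
          have h' : i0 ∈ univ.filter (fun i : Fin (n-1) => ¬ (pos i 2 ∈ T)) := by
            rw [hM]; exact Finset.mem_singleton_self i0
          exact (Finset.mem_filter.mp h').2
        have hother : ∀ i : Fin (n-1), i ≠ i0 → pos i 2 ∈ T := by
          intro i hne
          by_contra hc
          have h' : i ∈ univ.filter (fun i : Fin (n-1) => ¬ (pos i 2 ∈ T)) :=
            Finset.mem_filter.mpr ⟨Finset.mem_univ i, hc⟩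
          rw [hM, Finset.mem_singleton] at h'
          exact hne h'
        set g1 : Fin (n-1) → Fin 3 := fun i => if i = i0 then 0 else 2 with hg1
        have hg1i0 : g1 i0 = 0 := by rw [hg1]; simp
        have hg1other : ∀ i, i ≠ i0 → g1 i = 2 := by intro i hne; rw [hg1]; simp [hne]
        have hg1mem : ∀ i, pos i (g1 i) ∈ T := by
          intro i
          by_cases hi : i = i0
          · subst hi; rw [hg1i0, hpos0]; exact h0
          · rw [hg1other i hi]; exact hother i hi
        have hg1inj : ∀ x y, pos x (g1 x) = pos y (g1 y) → x = y := by
          intro x y h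
          by_cases hx : x = i0 <;> by_cases hy : y = i0
          · rw [hx, hy]
          · rw [hx, hg1i0, hpos0, hg1other y hy] at h
            exact absurd h.symm (hι2ne0 y)
          · rw [hy, hg1i0, hpos0, hg1other x hx] at h
            exact absurd h (hι2ne0 x)
          · rw [hg1other x hx, hg1other y hy] at h
            exact hι2inj x y h
        have hfib : univ.filter (fun g : Fin (n-1) → Fin 3 => D g = d) = {g1} := by
          ext g
          simp only [Finset.mem_filter, Finset.mem_univ, true_and, Finset.mem_singleton]
          constructor
          · intro hgd
            funext i
            by_cases hi : i = i0
            · subst hi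
              rcases fin3cases (g i) with hc | hc | hc
              · rw [hc, hg1i0]
              · exact absurd (hval1T g hgd i hc) h1
              · exact absurd hc (hnot2 g hgd i hi0mem)
            · rw [hg1other i hi]
              exact hforce2 g hgd i (hother i hi)
          · rintro rfl
            exact hDeq _ hg1inj hg1mem
        have hCfg1 : Cf g1 = lam i0 := by
          simp only [hCfdef]
          have hterm : ∀ i ∈ univ, (if g1 i = 0 then lam i else 1)
              = if i = i0 then lam i else 1 := by
            intro i _
            by_cases hi : i = i0
            · rw [if_pos hi, hi, hg1i0, if_pos rfl]
            · rw [if_neg hi, hg1other i hi, if_neg (show (2 : Fin 3) ≠ 0 by decide)]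
          rw [Finset.prod_congr rfl hterm, Finset.prod_ite_eq' univ i0 lam,
            if_pos (Finset.mem_univ i0)]
        rw [hcoeffd, hfib, Finset.sum_singleton, hCfg1]
        exact hlam0 i0

      · -- case C
        have hloweq : T.filter (fun j : Fin (n+1) => ¬ (2 ≤ (j:ℕ))) = {1} := by
          ext j
          rw [Finset.mem_filter, Finset.mem_singleton]
          constructor
          · rintro ⟨hjT, hj2⟩
            rcases (hlowA j).mp (by omega) with rfl | rfl
            · exact absurd hjT h0
            · rfl
          · rintro rfl
            refine ⟨h1, ?_⟩
            rw [fin_val1 n hn]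
            omega
        have hMcard : (univ.filter (fun i : Fin (n-1) => ¬ (pos i 2 ∈ T))).card = 1 := by
          rw [hloweq, Finset.card_singleton] at hTsplit
          omega
        obtain ⟨i0, hM⟩ := Finset.card_eq_one.mp hMcard
        have hi0mem : pos i0 2 ∉ T := by
          have h' : i0 ∈ univ.filter (fun i : Fin (n-1) => ¬ (pos i 2 ∈ T)) := by
            rw [hM]; exact Finset.mem_singleton_self i0
          exact (Finset.mem_filter.mp h').2
        have hother : ∀ i : Fin (n-1), i ≠ i0 → pos i 2 ∈ T := by
          intro i hne
          by_contra hc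
          have h' : i ∈ univ.filter (fun i : Fin (n-1) => ¬ (pos i 2 ∈ T)) :=
            Finset.mem_filter.mpr ⟨Finset.mem_univ i, hc⟩
          rw [hM, Finset.mem_singleton] at h'
          exact hne h'
        set g2 : Fin (n-1) → Fin 3 := fun i => if i = i0 then 1 else 2 with hg2
        have hg2i0 : g2 i0 = 1 := by rw [hg2]; simp
        have hg2other : ∀ i, i ≠ i0 → g2 i = 2 := by intro i hne; rw [hg2]; simp [hne]
        have hg2mem : ∀ i, pos i (g2 i) ∈ T := by
          intro i
          by_cases hi : i = i0
          · subst hi; rw [hg2i0, hpos1]; exact h1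
          · rw [hg2other i hi]; exact hother i hi
        have hg2inj : ∀ x y, pos x (g2 x) = pos y (g2 y) → x = y := by
          intro x y h
          by_cases hx : x = i0 <;> by_cases hy : y = i0
          · rw [hx, hy]
          · rw [hx, hg2i0, hpos1, hg2other y hy] at h
            exact absurd h.symm (hι2ne1 y)
          · rw [hy, hg2i0, hpos1, hg2other x hx] at h
            exact absurd h (hι2ne1 x)
          · rw [hg2other x hx, hg2other y hy] at h
            exact hι2inj x y h
        have hfib : univ.filter (fun g : Fin (n-1) → Fin 3 => D g = d) = {g2} := by
          ext g
          simp only [Finset.mem_filter, Finset.mem_univ, true_and, Finset.mem_singleton]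
          constructor
          · intro hgd
            funext i
            by_cases hi : i = i0
            · subst hi
              rcases fin3cases (g i) with hc | hc | hc
              · exact absurd (hval0T g hgd i hc) h0
              · rw [hc, hg2i0]
              · exact absurd hc (hnot2 g hgd i hi0mem)
            · rw [hg2other i hi]
              exact hforce2 g hgd i (hother i hi)
          · rintro rfl
            exact hDeq _ hg2inj hg2mem
        have hCfg2 : Cf g2 = 1 := by
          simp only [hCfdef]
          have hterm : ∀ i ∈ univ, (if g2 i = 0 then lam i else 1) = 1 := by
            intro i _
            by_cases hi : i = i0
            · rw [hi, hg2i0, if_neg (show (1 : Fin 3) ≠ 0 by decide)]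
            · rw [hg2other i hi, if_neg (show (2 : Fin 3) ≠ 0 by decide)]
          rw [Finset.prod_congr rfl hterm, Finset.prod_const_one]
        rw [hcoeffd, hfib, Finset.sum_singleton, hCfg2]
        exact one_ne_zero

      · -- case A : 0 ∉ T, 1 ∉ T
        have hlowempty : T.filter (fun j : Fin (n+1) => ¬ (2 ≤ (j:ℕ))) = ∅ := by
          rw [Finset.filter_eq_empty_iff]
          intro j hj hlt
          rcases (hlowA j).mp (by omega) with rfl | rfl
          exacts [h0 hj, h1 hj]
        have hMcard : (univ.filter (fun i : Fin (n-1) => ¬ (pos i 2 ∈ T))).card = 0 := by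
          rw [hlowempty] at hTsplit
          simp at hTsplit
          omega
        have hallT : ∀ i : Fin (n-1), pos i 2 ∈ T := by
          intro i
          by_contra hc
          have hmem : i ∈ univ.filter (fun i : Fin (n-1) => ¬ (pos i 2 ∈ T)) :=
            Finset.mem_filter.mpr ⟨Finset.mem_univ i, hc⟩
          rw [Finset.card_eq_zero.mp hMcard] at hmem
          exact absurd hmem (Finset.notMem_empty i)
        have hfib : univ.filter (fun g : Fin (n-1) → Fin 3 => D g = d)
            = {fun _ => (2 : Fin 3)} := by
          ext g
          simp only [Finset.mem_filter, Finset.mem_univ, true_and, Finset.mem_singleton]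
          constructor
          · intro hgd
            funext i
            exact hforce2 g hgd i (hallT i)
          · rintro rfl
            exact hDeq _ (fun i1 i2 h => hι2inj i1 i2 h) (fun i => hallT i)
        rw [hcoeffd, hfib, Finset.sum_singleton, hCfdef]
        have h20 : (2 : Fin 3) ≠ 0 := by decide
        simp only [if_neg h20, Finset.prod_const_one]
        exact one_ne_zero
    obtain ⟨j, hj⟩ := hvan d hcne
    have := hdlt j
    omega

  · -- easy direction
    intro h3 d hd
    rw [hcoeff d] at hd
    obtain ⟨g, -, hg⟩ := Finset.exists_ne_zero_of_sum_ne_zero hd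
    have hgd : D g = d := by
      by_contra h; rw [if_neg h] at hg; exact hg rfl
    by_cases hinj : Function.Injective (fun i => pos i (g i))
    · -- injective case: the image meets the small set
      set img := Finset.image (fun i => pos i (g i)) univ with himg
      have hcardim : img.card = n - 1 := by
        rw [himg, Finset.card_image_of_injective _ hinj, card_univ, Fintype.card_fin]
      have hmeet : ((univ.filter fun j : Fin (n+1) => a j ≤ (m - 1) / 2) ∩ img).Nonempty := by
        rw [← Finset.card_pos]
        have h1 := Finset.card_union_add_card_inter
          (univ.filter fun j : Fin (n+1) => a j ≤ (m - 1) / 2) img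
        have h2 : ((univ.filter fun j : Fin (n+1) => a j ≤ (m - 1) / 2) ∪ img).card ≤ n + 1 := by
          have := Finset.card_le_univ
            ((univ.filter fun j : Fin (n+1) => a j ≤ (m - 1) / 2) ∪ img)
          rwa [Fintype.card_fin] at this
        omega
      obtain ⟨j, hj⟩ := hmeet
      rw [Finset.mem_inter, Finset.mem_filter] at hj
      obtain ⟨⟨-, hjsmall⟩, hjimg⟩ := hj
      obtain ⟨i0, -, hi0⟩ := Finset.mem_image.mp hjimg
      refine ⟨j, ?_⟩
      have hmd : m ≤ d j := by
        rw [← hgd, hDapp]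
        calc m = if pos i0 (g i0) = j then m else 0 := by rw [if_pos hi0]
          _ ≤ ∑ i, if pos i (g i) = j then m else 0 :=
            Finset.single_le_sum (f := fun i => if pos i (g i) = j then m else 0)
              (fun i _ => Nat.zero_le _) (Finset.mem_univ i0)
      omega
    · -- non-injective: some exponent is ≥ 2m
      rw [Function.not_injective_iff] at hinj
      obtain ⟨i1, i2, heq, hne⟩ := hinj
      refine ⟨pos i1 (g i1), ?_⟩
      have key : m + m ≤ ∑ i, if pos i (g i) = pos i1 (g i1) then m else 0 := by
        have hsub : ({i1, i2} : Finset (Fin (n-1))) ⊆ univ := Finset.subset_univ _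
        have h := Finset.sum_le_sum_of_subset
          (f := fun i => if pos i (g i) = pos i1 (g i1) then m else 0) hsub
        rwa [Finset.sum_pair hne, if_pos rfl, if_pos heq.symm] at h
      rw [← hgd, hDapp]
      have := ham (pos i1 (g i1))
      omega
end
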